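/- Let a, b, c, d ∈ ℂ with c ∉ ℤ_{≤0}, d ∉ ℤ and b − d = m ∈ ℤ_{>0}. Then for every n ∈ ℤ_{≥0} and every z ∈ ℂ, the exact identity ₂F₂[a, b−n; c, d−n; z] = Σ_{k=0}^{m} ((a)_k (d−b)_k)/((c)_k (d−n)_k) · (−z)^k/k! · ₁F₁[a+k; c+k; z] holds (the sum terminates because (d−b)_k = 0 for k > m). -/

import Mathlib

/-- The Pochhammer symbol `(a)_n = a (a+1) ⋯ (a+n-1)`. -/
noncomputable def poch (a : ℂ) (n : ℕ) : ℂ := ∏ i ∈ Finset.range n, (a + i)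

/-- The confluent hypergeometric function `₁F₁[a; b; z]`. -/
noncomputable def F11 (a b z : ℂ) : ℂ :=
  ∑' n : ℕ, poch a n / poch b n * z ^ n / Nat.factorial n

/-- The generalized hypergeometric function `₂F₂[a₁, a₂; b₁, b₂; z]`. -/
noncomputable def F22 (a1 a2 b1 b2 z : ℂ) : ℂ :=
  ∑' n : ℕ, poch a1 n * poch a2 n / (poch b1 n * poch b2 n) * z ^ n / Nat.factorial n

/-!
Write `e = d - n`, so that `b - n = e + m` and `d - b = -m`. Expanding every `₁F₁[a+k; c+k; z]`
and collecting the coefficient of `z^N` on the right, the factor `(a)_N / ((c)_N N!)` comes out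
and, since `(-1)^k (-m)_k = m (m-1) ⋯ (m-k+1)`, what remains is
`Σ_k C(N,k) m(m-1)⋯(m-k+1) (e+k)_{N-k} / (e)_N`. By the Chu–Vandermonde identity
(Mathlib's `Ring.descPochhammer_smeval_add`, read through `(x)_N = (x+N-1)(x+N-2)⋯x`) the numerator
is `(e+m)_N`, which is the coefficient of `z^N` in `₂F₂[a, e+m; c, e; z]`.
-/

open Finset Polynomial

theorem poch_eq_ascPochhammer_eval (a : ℂ) (n : ℕ) : poch a n = (ascPochhammer ℂ n).eval a := by
  induction n with
  | zero => simp [poch]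
  | succ n ih => rw [poch, prod_range_succ, ← poch, ih, ascPochhammer_succ_eval]

theorem poch_add (a : ℂ) (k j : ℕ) : poch a (k + j) = poch a k * poch (a + k) j := by
  simp only [poch, prod_range_add, Nat.cast_add, add_assoc]

theorem poch_ne_zero {a : ℂ} (ha : ∀ i : ℕ, a + i ≠ 0) (n : ℕ) : poch a n ≠ 0 :=
  prod_ne_zero_iff.mpr fun i _ => ha i

theorem poch_neg_natCast (m k : ℕ) : poch (-m) k = (-1) ^ k * m.descFactorial k := by
  rw [poch_eq_ascPochhammer_eval, ascPochhammer_eval_neg_eq_descPochhammer,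
    descPochhammer_eval_eq_descFactorial]

theorem poch_eq_descPochhammer_smeval (a : ℂ) (n : ℕ) :
    poch a n = (descPochhammer ℤ n).smeval (a + n - 1) := by
  rw [descPochhammer_smeval_eq_ascPochhammer, ascPochhammer_smeval_eq_eval,
    poch_eq_ascPochhammer_eval]
  ring_nf

theorem poch_add_natCast_eq_sum (e : ℂ) (m N : ℕ) :
    poch (e + m) N =
      ∑ k ∈ range (m + 1), N.choose k * m.descFactorial k * poch (e + k) (N - k) := by
  have hvandermonde : poch (e + m) N =
      ∑ k ∈ range (N + 1), N.choose k * m.descFactorial k * poch (e + k) (N - k) := by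
    rw [poch_eq_descPochhammer_smeval, show e + m + N - 1 = (m : ℂ) + (e + N - 1) by ring,
      Ring.descPochhammer_smeval_add _ (Commute.all _ _),
      Nat.sum_antidiagonal_eq_sum_range_succ (fun i j => (N.choose i : ℂ) *
        ((descPochhammer ℤ i).smeval (m : ℂ) * (descPochhammer ℤ j).smeval (e + N - 1)))]
    refine sum_congr rfl fun k hk => ?_
    rw [descPochhammer_smeval_eq_descFactorial, poch_eq_descPochhammer_smeval, mul_assoc,
      Nat.cast_sub (mem_range_succ_iff.mp hk)]
    ring_nf
  rw [hvandermonde]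
  rcases le_total m N with hmN | hNm
  · refine (sum_subset (range_subset_range.mpr (by omega)) fun k _ hkm => ?_).symm
    simp [Nat.descFactorial_eq_zero_iff_lt.mpr (not_lt.mp (mt mem_range.mpr hkm))]
  · refine sum_subset (range_subset_range.mpr (by omega)) fun k _ hkN => ?_
    simp [Nat.choose_eq_zero_of_lt (not_lt.mp (mt mem_range.mpr hkN))]

noncomputable def F11Term (a c z : ℂ) (j : ℕ) : ℂ := poch a j / poch c j * z ^ j / j.factorial

/-- The coefficients of the terminating expansion are `F22Term a (-m) c e (-z) k`. -/
noncomputable def F22Term (a1 a2 b1 b2 z : ℂ) (j : ℕ) : ℂ :=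
  poch a1 j * poch a2 j / (poch b1 j * poch b2 j) * z ^ j / j.factorial

theorem F11Term_succ (a c z : ℂ) (j : ℕ) :
    F11Term a c z (j + 1) = F11Term a c z j * ((a + j) / (c + j) * z / (j + 1)) := by
  simp only [F11Term, poch, prod_range_succ, pow_succ, Nat.factorial_succ, Nat.cast_mul,
    Nat.cast_succ, div_eq_mul_inv, mul_inv]
  ring

theorem summable_F11Term (a c z : ℂ) : Summable (F11Term a c z) := by
  refine summable_of_ratio_norm_eventually_le (r := 1 / 2) (by norm_num) ?_
  filter_upwards [Filter.eventually_ge_atTop ⌈‖a‖ + 2 * ‖c‖ + 4 * ‖z‖⌉₊] with j hj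
  have hj : ‖a‖ + 2 * ‖c‖ + 4 * ‖z‖ ≤ j := Nat.ceil_le.mp hj
  have hnum : ‖a + j‖ ≤ ‖a‖ + j := (norm_add_le _ _).trans (by rw [Complex.norm_natCast])
  have hden : (j : ℝ) - ‖c‖ ≤ ‖c + j‖ := by simpa [add_comm] using norm_sub_norm_le (j : ℂ) (-c)
  have hratio : ‖(a + j) / (c + j)‖ ≤ 2 := by
    rw [norm_div]
    exact div_le_of_le_mul₀ (norm_nonneg _) zero_le_two (by linarith [norm_nonneg z])
  have hz : ‖z / (j + 1)‖ ≤ 1 / 4 := by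
    have hnorm : ‖(j + 1 : ℂ)‖ = j + 1 := by exact_mod_cast Complex.norm_natCast (j + 1)
    rw [norm_div, hnorm, div_le_iff₀ (by positivity)]
    linarith [norm_nonneg a, norm_nonneg c]
  rw [F11Term_succ, norm_mul, mul_comm, mul_div_assoc, norm_mul]
  gcongr
  calc ‖(a + j) / (c + j)‖ * ‖z / (j + 1)‖ ≤ 2 * (1 / 4) := by gcongr
    _ ≤ 1 / 2 := by norm_num

theorem HasSum.ite_le_sub {M : Type*} [AddCommMonoid M] [TopologicalSpace M] {f : ℕ → M} {s : M}
    (hf : HasSum f s) (k : ℕ) : HasSum (fun N => if k ≤ N then f (N - k) else 0) s := by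
  refine (Function.Injective.hasSum_iff (add_left_injective k) fun N hN => ?_).mp ?_
  · rw [if_neg]
    rintro hkN
    exact hN ⟨N - k, Nat.sub_add_cancel hkN⟩
  · simpa [Function.comp_def] using hf

theorem F22Term_mul_F11Term_eq (a c e z : ℂ) (m : ℕ) {k N : ℕ} (hkN : k ≤ N)
    (hc : poch c N ≠ 0) (he : poch e N ≠ 0) :
    F22Term a (-m) c e (-z) k * F11Term (a + k) (c + k) z (N - k) =
      N.choose k * m.descFactorial k * poch (e + k) (N - k) *
        (poch a N / (poch c N * poch e N) * z ^ N / N.factorial) := by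
  obtain ⟨j, rfl⟩ := Nat.exists_eq_add_of_le hkN
  obtain ⟨hc₁, hc₂⟩ := mul_ne_zero_iff.mp (poch_add c k j ▸ hc)
  obtain ⟨he₁, he₂⟩ := mul_ne_zero_iff.mp (poch_add e k j ▸ he)
  have hfactorial : ((k + j).factorial : ℂ) = (k + j).choose k * k.factorial * j.factorial := by
    rw [Nat.choose_symm_add]
    exact_mod_cast (Nat.add_choose_mul_factorial_mul_factorial k j).symm
  have hchoose : ((k + j).choose k : ℂ) ≠ 0 := by exact_mod_cast (Nat.choose_pos hkN).ne'
  have hsign : ((-1 : ℂ) ^ k) ^ 2 = 1 := by rw [← pow_mul, mul_comm, pow_mul]; norm_num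
  rw [Nat.add_sub_cancel_left, F22Term, F11Term, poch_add a, poch_add c, poch_add e, hfactorial,
    poch_neg_natCast, neg_pow z, pow_add]
  field_simp
  rw [hsign, mul_one]

theorem sum_F22Term_mul_F11Term_eq (a c e z : ℂ) (m N : ℕ) (hc : poch c N ≠ 0)
    (he : poch e N ≠ 0) :
    ∑ k ∈ range (m + 1),
      (if k ≤ N then F22Term a (-m) c e (-z) k * F11Term (a + k) (c + k) z (N - k) else 0) =
      F22Term a (e + m) c e z N := by
  have hterm : ∀ k, (if k ≤ N then F22Term a (-m) c e (-z) k * F11Term (a + k) (c + k) z (N - k)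
      else 0) = N.choose k * m.descFactorial k * poch (e + k) (N - k) *
        (poch a N / (poch c N * poch e N) * z ^ N / N.factorial) := by
    intro k
    split_ifs with hkN
    · exact F22Term_mul_F11Term_eq a c e z m hkN hc he
    · simp [Nat.choose_eq_zero_of_lt (not_le.mp hkN)]
  rw [sum_congr rfl fun k _ => hterm k, ← sum_mul, ← poch_add_natCast_eq_sum, F22Term]
  ring

theorem F22_add_natCast_eq_sum (a c e z : ℂ) (m : ℕ) (hc : ∀ i : ℕ, c + i ≠ 0)
    (he : ∀ i : ℕ, e + i ≠ 0) :
    F22 a (e + m) c e z =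
      ∑ k ∈ range (m + 1), F22Term a (-m) c e (-z) k * F11 (a + k) (c + k) z := by
  refine HasSum.tsum_eq ?_
  have hshifted : ∀ k ∈ range (m + 1), HasSum (fun N => if k ≤ N then
      F22Term a (-m) c e (-z) k * F11Term (a + k) (c + k) z (N - k) else 0)
      (F22Term a (-m) c e (-z) k * F11 (a + k) (c + k) z) :=
    fun k _ => ((summable_F11Term _ _ _).hasSum.mul_left _).ite_le_sub k
  convert hasSum_sum hshifted using 1
  funext N
  rw [sum_F22Term_mul_F11Term_eq a c e z m N (poch_ne_zero hc N) (poch_ne_zero he N), F22Term]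

theorem F22_terminating_case_general (a b c d : ℂ)
    (hc : ∀ m' : ℕ, c ≠ -(m' : ℂ)) (hd : ∀ m' : ℤ, d ≠ (m' : ℂ))
    (m : ℕ) (hbd : b - d = (m : ℂ)) :
    ∀ n : ℕ, ∀ z : ℂ,
      F22 a (b - n) c (d - n) z =
        ∑ k ∈ Finset.range (m + 1), poch a k * poch (d - b) k /
          (poch c k * poch (d - n) k) * (-z) ^ k / Nat.factorial k *
          F11 (a + k) (c + k) z := by
  intro n z
  have hb : b - n = (d - n) + m := by rw [← hbd]; ring
  have hdb : d - b = -m := by rw [← hbd]; ring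
  rw [hb, hdb]
  refine F22_add_natCast_eq_sum a c (d - n) z m (fun i h => hc i ?_) (fun i h => hd (n - i) ?_)
  · linear_combination h
  · push_cast
    linear_combination h

/-- Remark after Theorem 4.3: when `b − d = m ∈ ℤ_{>0}`, the expansion of
`₂F₂[a, b−n; c, d−n; z]` terminates and is exact. -/
theorem F22_terminating_case (a b c d : ℂ)
    (hc : ∀ m' : ℕ, c ≠ -(m' : ℂ)) (hd : ∀ m' : ℤ, d ≠ (m' : ℂ))
    (m : ℕ) (hm : 0 < m) (hbd : b - d = (m : ℂ)) :
    ∀ n : ℕ, ∀ z : ℂ,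
      F22 a (b - n) c (d - n) z =
        ∑ k ∈ Finset.range (m + 1), poch a k * poch (d - b) k /
          (poch c k * poch (d - n) k) * (-z) ^ k / Nat.factorial k *
          F11 (a + k) (c + k) z :=
  F22_terminating_case_general a b c d hc hd m hbd
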